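/- If a query range [Ts, Te) is neither a prefix nor a suffix of any node's interval equal to it, and is strictly inside the root's interval, then there exist two nodes v₁, v₂ of the segment tree, neither equal to the root, such that τ_{v₁} = σ_{v₂}, [Ts, Te) ⊆ [σ_{v₁}, τ_{v₂}), Ts > σ_{v₁}, and Te < τ_{v₂}; hence the query decomposes into a suffix query on v₁'s subtree and a prefix query on v₂'s subtree. -/
import Mathlib


inductive SegTree : ℕ → ℕ → Type
  | leaf (t : ℕ) : SegTree t (t + 1)
  | node {a m b : ℕ} (l : SegTree a m) (r : SegTree m b) : SegTree a b

/-- The set of intervals of the nodes of the tree. -/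
def SegTree.intervals : ∀ {a b : ℕ}, SegTree a b → Finset (ℕ × ℕ)
  | _, _, .leaf t => {(t, t + 1)}
  | a, b, .node l r => insert (a, b) (l.intervals ∪ r.intervals)

theorem SegTree.self_mem_intervals : ∀ {a b : ℕ} (s : SegTree a b), (a, b) ∈ s.intervals
  | _, _, .leaf _ => by simp [SegTree.intervals]
  | _, _, .node _ _ => by simp [SegTree.intervals]

theorem stmt16_aux {Ts Te : ℕ} (hTsTe : Ts < Te) :
    ∀ {a b : ℕ} (s : SegTree a b), a ≤ Ts → Te ≤ b →
    (∀ I ∈ s.intervals, ¬(Ts = I.1 ∧ Te ≤ I.2)) →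
    (∀ I ∈ s.intervals, ¬(Te = I.2 ∧ I.1 ≤ Ts)) →
    ∃ I₁ ∈ s.intervals, ∃ I₂ ∈ s.intervals,
      I₁.2 = I₂.1 ∧ I₁.1 < Ts ∧ Ts < I₁.2 ∧ I₂.1 < Te ∧ Te < I₂.2 := by
  intro a b s
  induction s with
  | leaf t =>
    intro h1 h2 hnp _
    exact absurd ⟨by omega, by omega⟩ (hnp (t, t + 1) (by simp [SegTree.intervals]))
  | @node a m b l r ihl ihr =>
    intro ha hb hnp hns
    have hmeml : ∀ I ∈ l.intervals, I ∈ (SegTree.node l r).intervals := by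
      intro I hI; simp [SegTree.intervals]; tauto
    have hmemr : ∀ I ∈ r.intervals, I ∈ (SegTree.node l r).intervals := by
      intro I hI; simp [SegTree.intervals]; tauto
    by_cases hTem : Te ≤ m
    · obtain ⟨I₁, h₁, I₂, h₂, hrest⟩ :=
        ihl ha hTem (fun I hI => hnp I (hmeml I hI)) (fun I hI => hns I (hmeml I hI))
      exact ⟨I₁, hmeml I₁ h₁, I₂, hmeml I₂ h₂, hrest⟩
    · by_cases hmTs : m ≤ Ts
      · obtain ⟨I₁, h₁, I₂, h₂, hrest⟩ :=
          ihr hmTs hb (fun I hI => hnp I (hmemr I hI)) (fun I hI => hns I (hmemr I hI))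
        exact ⟨I₁, hmemr I₁ h₁, I₂, hmemr I₂ h₂, hrest⟩
      · have hroot : (a, b) ∈ (SegTree.node l r).intervals := by simp [SegTree.intervals]
        have haTs : a < Ts := by
          rcases lt_or_eq_of_le ha with h | h
          · exact h
          · exact absurd ⟨h.symm, hb⟩ (hnp (a, b) hroot)
        have hTeb : Te < b := by
          rcases lt_or_eq_of_le hb with h | h
          · exact h
          · exact absurd ⟨h, ha⟩ (hns (a, b) hroot)
        exact ⟨(a, m), hmeml _ l.self_mem_intervals, (m, b), hmemr _ r.self_mem_intervals,
          rfl, haTs, by omega, by omega, hTeb⟩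

theorem stmt_16 {T : ℕ} (t : SegTree 0 T) (Ts Te : ℕ)
    (h0 : 0 < Ts) (hTsTe : Ts < Te) (hT : Te < T)
    (hnp : ∀ I ∈ t.intervals, ¬(Ts = I.1 ∧ Te ≤ I.2))
    (hns : ∀ I ∈ t.intervals, ¬(Te = I.2 ∧ I.1 ≤ Ts)) :
    ∃ I₁ ∈ t.intervals, ∃ I₂ ∈ t.intervals,
      I₁ ≠ (0, T) ∧ I₂ ≠ (0, T) ∧ I₁.2 = I₂.1 ∧
      I₁.1 < Ts ∧ Ts < I₁.2 ∧ I₂.1 < Te ∧ Te < I₂.2 := by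
  obtain ⟨I₁, h₁, I₂, h₂, heq, h3, h4, h5, h6⟩ :=
    stmt16_aux hTsTe t (Nat.zero_le _) (le_of_lt hT) hnp hns
  refine ⟨I₁, h₁, I₂, h₂, ?_, ?_, heq, h3, h4, h5, h6⟩
  · intro h; rw [h] at heq h4; omega
  · intro h; rw [h] at h5 heq; simp at heq ⊢; omega
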